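/- For the summed quadratic biobjective problem with f1(x) = (1/2)(1−(x1−1)^2) + (1/2)(1−(x2−1)^2) and f2(x) = (1/2)(1−x1^2) + (1/2)(1−x2^2) on Ω = [−2,2]^2, the efficient set is exactly the diagonal segment {(t,t) : t ∈ [0,1]}. -/
import Mathlib
set_option maxHeartbeats 800000


open Set

noncomputable def f1 (x : ℝ × ℝ) : ℝ :=
  (1/2) * (1 - (x.1 - 1)^2) + (1/2) * (1 - (x.2 - 1)^2)

noncomputable def f2 (x : ℝ × ℝ) : ℝ :=
  (1/2) * (1 - x.1^2) + (1/2) * (1 - x.2^2)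

def Omega : Set (ℝ × ℝ) := Icc (-2 : ℝ) 2 ×ˢ Icc (-2 : ℝ) 2

/-- `x` is efficient: no feasible `y` weakly improves both objectives with a
different objective vector. -/
def Efficient (x : ℝ × ℝ) : Prop :=
  x ∈ Omega ∧
    ¬ ∃ y ∈ Omega, f1 x ≤ f1 y ∧ f2 x ≤ f2 y ∧ (f1 y, f2 y) ≠ (f1 x, f2 x)

theorem efficient_set_is_diagonal :
    {x : ℝ × ℝ | Efficient x} = {x : ℝ × ℝ | ∃ t ∈ Icc (0 : ℝ) 1, x = (t, t)} := by
  ext x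
  simp only [mem_setOf_eq]
  constructor
  · rintro ⟨hx, h⟩
    push_neg at h
    set m : ℝ := (x.1 + x.2) / 2 with hm
    rcases lt_or_ge m 0 with hm0 | hm0
    · -- contradiction using y = (0,0)
      exfalso
      have hy : ((0:ℝ), (0:ℝ)) ∈ Omega := by
        constructor <;> constructor <;> norm_num
      have h1 : f1 x ≤ f1 ((0:ℝ), (0:ℝ)) := by
        simp only [f1]
        nlinarith [sq_nonneg (x.1 - x.2)]
      have h2 : f2 x ≤ f2 ((0:ℝ), (0:ℝ)) := by
        simp only [f2]
        nlinarith [sq_nonneg (x.1 - x.2)]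
      have := h _ hy h1 h2
      have h2' : f2 ((0:ℝ), (0:ℝ)) = f2 x := congrArg Prod.snd this
      simp only [f2] at h2'
      nlinarith [sq_nonneg (x.1 - x.2)]
    · rcases le_or_gt m 1 with hm1 | hm1
      · -- m ∈ [0,1] : use y = (m,m), conclude x = (m,m)
        have hy : ((m:ℝ), (m:ℝ)) ∈ Omega := by
          constructor <;> constructor <;> simp <;> linarith [hm0]
        have h1 : f1 x ≤ f1 ((m:ℝ), (m:ℝ)) := by
          simp only [f1, hm]
          nlinarith [sq_nonneg (x.1 - x.2)]
        have h2 : f2 x ≤ f2 ((m:ℝ), (m:ℝ)) := by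
          simp only [f2, hm]
          nlinarith [sq_nonneg (x.1 - x.2)]
        have heq := h _ hy h1 h2
        have h2' : f2 ((m:ℝ), (m:ℝ)) = f2 x := congrArg Prod.snd heq
        simp only [f2, hm] at h2'
        have hd : x.1 = x.2 := by nlinarith [sq_nonneg (x.1 - x.2)]
        refine ⟨x.1, ⟨?_, ?_⟩, ?_⟩
        · nlinarith [hm0]
        · nlinarith
        · exact Prod.ext rfl hd.symm
      · -- m > 1 : contradiction using y = (1,1)
        exfalso
        have hy : ((1:ℝ), (1:ℝ)) ∈ Omega := by
          constructor <;> constructor <;> norm_num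
        have h1 : f1 x ≤ f1 ((1:ℝ), (1:ℝ)) := by
          simp only [f1]
          nlinarith [sq_nonneg (x.1 - x.2)]
        have h2 : f2 x ≤ f2 ((1:ℝ), (1:ℝ)) := by
          simp only [f2]
          nlinarith [sq_nonneg (x.1 - x.2)]
        have := h _ hy h1 h2
        have h2' : f2 ((1:ℝ), (1:ℝ)) = f2 x := congrArg Prod.snd this
        simp only [f2] at h2'
        nlinarith [sq_nonneg (x.1 - x.2)]
  · rintro ⟨t, ⟨ht0, ht1⟩, rfl⟩
    refine ⟨⟨⟨by linarith, by linarith⟩, ⟨by linarith, by linarith⟩⟩, ?_⟩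
    rintro ⟨y, hy, h1, h2, hne⟩
    simp only [f1, f2] at h1 h2 hne
    have hs : y.1 ^ 2 + y.2 ^ 2 ≤ 2 * t ^ 2 := by nlinarith
    have ha : y.1 + y.2 ≤ 2 * t := by
      nlinarith [sq_nonneg (y.1 - y.2), sq_nonneg (y.1 + y.2 + 2 * t)]
    have e1 : (y.1 + y.2) - (y.1 ^ 2 + y.2 ^ 2) / 2 = 2 * t - t ^ 2 := by
      refine le_antisymm ?_ (by nlinarith)
      nlinarith [sq_nonneg (y.1 - y.2),
        mul_nonneg (by linarith : (0:ℝ) ≤ 2 * t - (y.1 + y.2))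
          (by linarith : (0:ℝ) ≤ 4 - 2 * t - (y.1 + y.2))]
    have hq : 0 ≤ 4 * (y.1 + y.2) - 8 * t + 4 * t ^ 2 - (y.1 + y.2) ^ 2 := by
      nlinarith [sq_nonneg (y.1 - y.2)]
    have ha2 : y.1 + y.2 = 2 * t := by
      refine le_antisymm ha ?_
      nlinarith [hq, mul_nonneg (by linarith : (0:ℝ) ≤ 2 * t - (y.1 + y.2))
          (by linarith : (0:ℝ) ≤ 1 - t)]
    have hs2 : y.1 ^ 2 + y.2 ^ 2 = 2 * t ^ 2 := by linarith
    apply hne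
    have e2 : (1:ℝ)/2 * (1 - y.1 ^ 2) + 1/2 * (1 - y.2 ^ 2)
        = 1/2 * (1 - t ^ 2) + 1/2 * (1 - t ^ 2) := by linarith
    have e3 : (1:ℝ)/2 * (1 - (y.1 - 1) ^ 2) + 1/2 * (1 - (y.2 - 1) ^ 2)
        = 1/2 * (1 - (t - 1) ^ 2) + 1/2 * (1 - (t - 1) ^ 2) := by nlinarith
    rw [e2, e3]
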